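/- arXiv:1709.08582 — 2 statements merged into one kernel-verified Lean document; each statement's English description precedes it below -/
import Mathlib

section
/- For the quadratic Lie superalgebra g₄,₂ = ℂX₀ ⊕ ℂY₀ ⊕ ℂX₁ ⊕ ℂY₁ with nonzero brackets [X₁,Y₁] = X₀, [Y₀,X₁] = X₁, [Y₀,Y₁] = -Y₁, the second Lie superalgebra cohomology group with trivial coefficients vanishes: H²(g₄,₂, ℂ) = 0. -/
/-- A bilinear scalar-valued map, given as a bare function. -/
def IsBilinC {M N : Type*} [AddCommGroup M] [Module ℂ M] [AddCommGroup N] [Module ℂ N]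
    (f : M → N → ℂ) : Prop :=
  (∀ (c : ℂ) (x y : M) (z : N), f (c • x + y) z = c * f x z + f y z) ∧
  (∀ (c : ℂ) (x : M) (y z : N), f x (c • y + z) = c * f x y + f x z)

/-- A linear scalar-valued map, given as a bare function. -/
def IsLinC {M : Type*} [AddCommGroup M] [Module ℂ M] (f : M → ℂ) : Prop :=
  ∀ (c : ℂ) (x y : M), f (c • x + y) = c * f x + f y

/- The elementary quadratic Lie superalgebra `g₄,₂ˢ`: even part `ℂX₀ ⊕ ℂY₀`,
odd part `ℂX₁ ⊕ ℂY₁`, nonzero brackets `[X₁,Y₁] = X₀`, `[Y₀,X₁] = X₁`,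
`[Y₀,Y₁] = -Y₁`.  Bracket components: -/

/-- even-even bracket of `g₄,₂` (zero). -/
def br00 : ℂ × ℂ → ℂ × ℂ → ℂ × ℂ := fun _ _ => (0, 0)

/-- even-odd bracket of `g₄,₂`: `[Y₀,X₁] = X₁`, `[Y₀,Y₁] = -Y₁`. -/
def br01 : ℂ × ℂ → ℂ × ℂ → ℂ × ℂ := fun A U => (A.2 * U.1, -(A.2 * U.2))

/-- odd-odd bracket of `g₄,₂`: `[X₁,Y₁] = X₀` (symmetric). -/
def br11 : ℂ × ℂ → ℂ × ℂ → ℂ × ℂ := fun U V => (U.1 * V.2 + U.2 * V.1, 0)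

/-- A 2-cocycle of `g₄,₂` with trivial coefficients: a 2-cochain
`(w0, wm, w1) ∈ Λ²g₀* ⊕ (g₀* ⊗ g₁*) ⊕ Sym²g₁*` killed by the Chevalley–Eilenberg
differential `δ₂` (written out on homogeneous triples of each degree type). -/
def IsCocycle2 (w0 : ℂ × ℂ → ℂ × ℂ → ℂ) (wm : ℂ × ℂ → ℂ × ℂ → ℂ)
    (w1 : ℂ × ℂ → ℂ × ℂ → ℂ) : Prop :=
  IsBilinC w0 ∧ IsBilinC wm ∧ IsBilinC w1 ∧
  (∀ A B, w0 A B = - w0 B A) ∧ (∀ U V, w1 U V = w1 V U) ∧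
  (∀ A B C, - w0 (br00 A B) C + w0 (br00 A C) B + w0 A (br00 B C) = 0) ∧
  (∀ A B U, - wm (br00 A B) U - wm B (br01 A U) + wm A (br01 B U) = 0) ∧
  (∀ A U V, - w1 (br01 A U) V - w1 (br01 A V) U + w0 A (br11 U V) = 0) ∧
  (∀ U V W, wm (br11 U V) W + wm (br11 U W) V + wm (br11 V W) U = 0)

/-- A 2-coboundary of `g₄,₂`: `δ₁` of a 1-cochain `φ = (f0, f1) ∈ g₀* ⊕ g₁*`,
`(δφ)(X,Y) = -φ([X,Y])`. -/
def IsCoboundary2 (w0 : ℂ × ℂ → ℂ × ℂ → ℂ) (wm : ℂ × ℂ → ℂ × ℂ → ℂ)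
    (w1 : ℂ × ℂ → ℂ × ℂ → ℂ) : Prop :=
  ∃ (f0 : ℂ × ℂ → ℂ) (f1 : ℂ × ℂ → ℂ), IsLinC f0 ∧ IsLinC f1 ∧
    (∀ A B, w0 A B = - f0 (br00 A B)) ∧
    (∀ A U, wm A U = - f1 (br01 A U)) ∧
    (∀ U V, w1 U V = - f0 (br11 U V))

/-!
Expanding the cochains in the bases `X₀ = (1,0), Y₀ = (0,1)` and `X₁ = (1,0), Y₁ = (0,1)`,
the cocycle condition on `(X₀, Y₀, U)` kills `wm (X₀, ·)`, because `ad Y₀` is invertible on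
`g₁`, and the condition on `(Y₀, U, V)` kills `w1 (X₁, X₁)`, `w1 (Y₁, Y₁)` and `w0`. What is
left, `wm (Y₀, ·)` and `w1 (X₁, Y₁)`, is `-φ ∘ [·,·]` for `φ` supported on `X₀^*`, `X₁^*`, `Y₁^*`.
-/

theorem IsLinC.map_zero {M : Type*} [AddCommGroup M] [Module ℂ M] {f : M → ℂ}
    (hf : IsLinC f) : f 0 = 0 := by
  simpa using hf 1 0 0

theorem IsLinC.apply_eq {f : ℂ × ℂ → ℂ} (hf : IsLinC f) (x : ℂ × ℂ) :
    f x = x.1 * f (1, 0) + x.2 * f (0, 1) := by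
  have hx : x = x.1 • ((1, 0) : ℂ × ℂ) + (x.2 • ((0, 1) : ℂ × ℂ) + 0) := by
    ext <;> simp
  rw [hx, hf, hf, hf.map_zero]
  simp

namespace IsBilinC

variable {M N : Type*} [AddCommGroup M] [Module ℂ M] [AddCommGroup N] [Module ℂ N]
  {f : M → N → ℂ}

theorem left (hf : IsBilinC f) (z : N) : IsLinC (f · z) :=
  fun c x y => hf.1 c x y z

theorem right (hf : IsBilinC f) (x : M) : IsLinC (f x) :=
  fun c y z => hf.2 c x y z

theorem apply_zero_left (hf : IsBilinC f) (z : N) : f 0 z = 0 :=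
  (hf.left z).map_zero

theorem apply_zero_right (hf : IsBilinC f) (x : M) : f x 0 = 0 :=
  (hf.right x).map_zero

end IsBilinC

theorem IsBilinC.apply_eq {f : ℂ × ℂ → ℂ × ℂ → ℂ} (hf : IsBilinC f) (x y : ℂ × ℂ) :
    f x y = x.1 * y.1 * f (1, 0) (1, 0) + x.1 * y.2 * f (1, 0) (0, 1)
      + x.2 * y.1 * f (0, 1) (1, 0) + x.2 * y.2 * f (0, 1) (0, 1) := by
  rw [(hf.left y).apply_eq, (hf.right (1, 0)).apply_eq y, (hf.right (0, 1)).apply_eq y]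
  ring

namespace IsCocycle2

variable {w0 wm w1 : ℂ × ℂ → ℂ × ℂ → ℂ}

theorem isBilinC_w0 (h : IsCocycle2 w0 wm w1) : IsBilinC w0 := h.1

theorem isBilinC_wm (h : IsCocycle2 w0 wm w1) : IsBilinC wm := h.2.1

theorem isBilinC_w1 (h : IsCocycle2 w0 wm w1) : IsBilinC w1 := h.2.2.1

theorem w0_antisymm (h : IsCocycle2 w0 wm w1) (A B : ℂ × ℂ) : w0 A B = -w0 B A :=
  h.2.2.2.1 A B

theorem w1_symm (h : IsCocycle2 w0 wm w1) (U V : ℂ × ℂ) : w1 U V = w1 V U :=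
  h.2.2.2.2.1 U V

theorem even_even_odd (h : IsCocycle2 w0 wm w1) (A B U : ℂ × ℂ) :
    -wm (br00 A B) U - wm B (br01 A U) + wm A (br01 B U) = 0 :=
  h.2.2.2.2.2.2.1 A B U

theorem even_odd_odd (h : IsCocycle2 w0 wm w1) (A U V : ℂ × ℂ) :
    -w1 (br01 A U) V - w1 (br01 A V) U + w0 A (br11 U V) = 0 :=
  h.2.2.2.2.2.2.2.1 A U V

theorem wm_X₀ (h : IsCocycle2 w0 wm w1) (U : ℂ × ℂ) : wm (1, 0) U = 0 := by
  have := h.even_even_odd (1, 0) (0, 1) (U.1, -U.2)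
  simpa [br00, br01, Prod.mk_zero_zero, h.isBilinC_wm.apply_zero_left,
    h.isBilinC_wm.apply_zero_right] using this

theorem w1_X₁_X₁ (h : IsCocycle2 w0 wm w1) : w1 (1, 0) (1, 0) = 0 := by
  have := h.even_odd_odd (0, 1) (1, 0) (1, 0)
  norm_num [br01, br11, Prod.mk_zero_zero, h.isBilinC_w0.apply_zero_right] at this
  linear_combination -this / 2

theorem w1_Y₁_Y₁ (h : IsCocycle2 w0 wm w1) : w1 (0, 1) (0, 1) = 0 := by
  have := h.even_odd_odd (0, 1) (0, 1) (0, 1)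
  simpa [br01, br11, Prod.mk_zero_zero, h.isBilinC_w0.apply_zero_right,
    h.isBilinC_w1.apply_eq (0, -1)] using this

theorem w0_Y₀_X₀ (h : IsCocycle2 w0 wm w1) : w0 (0, 1) (1, 0) = 0 := by
  have := h.even_odd_odd (0, 1) (1, 0) (0, 1)
  norm_num [br01, br11, h.isBilinC_w1.apply_eq (0, -1)] at this
  linear_combination this - h.w1_symm (0, 1) (1, 0)

theorem w0_eq_zero (h : IsCocycle2 w0 wm w1) (A B : ℂ × ℂ) : w0 A B = 0 := by
  have hanti := h.w0_antisymm
  rw [h.isBilinC_w0.apply_eq]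
  linear_combination A.1 * B.1 * hanti (1, 0) (1, 0) / 2 + A.2 * B.2 * hanti (0, 1) (0, 1) / 2
    + A.1 * B.2 * hanti (1, 0) (0, 1) + (A.2 * B.1 - A.1 * B.2) * h.w0_Y₀_X₀

theorem wm_apply (h : IsCocycle2 w0 wm w1) (A U : ℂ × ℂ) :
    wm A U = A.2 * (U.1 * wm (0, 1) (1, 0) + U.2 * wm (0, 1) (0, 1)) := by
  rw [h.isBilinC_wm.apply_eq, h.wm_X₀, h.wm_X₀]
  ring

theorem w1_apply (h : IsCocycle2 w0 wm w1) (U V : ℂ × ℂ) :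
    w1 U V = (U.1 * V.2 + U.2 * V.1) * w1 (1, 0) (0, 1) := by
  rw [h.isBilinC_w1.apply_eq, h.w1_X₁_X₁, h.w1_Y₁_Y₁, h.w1_symm (0, 1) (1, 0)]
  ring

end IsCocycle2

/-- The second cohomology group with trivial coefficients of the elementary quadratic
Lie superalgebra `g₄,₂ˢ` vanishes: every 2-cocycle is a 2-coboundary. -/
theorem second_cohomology_g42_trivial
    (w0 wm w1 : ℂ × ℂ → ℂ × ℂ → ℂ) (h : IsCocycle2 w0 wm w1) :
    IsCoboundary2 w0 wm w1 := by
  refine ⟨fun A => -w1 (1, 0) (0, 1) * A.1,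
    fun U => -wm (0, 1) (1, 0) * U.1 + wm (0, 1) (0, 1) * U.2, ?_, ?_, ?_, ?_, ?_⟩
  · intro c x y
    simp only [Prod.fst_add, Prod.smul_fst, smul_eq_mul]
    ring
  · intro c x y
    simp only [Prod.fst_add, Prod.snd_add, Prod.smul_fst, Prod.smul_snd, smul_eq_mul]
    ring
  · intro A B
    simp [br00, h.w0_eq_zero]
  · intro A U
    rw [h.wm_apply, br01]
    ring
  · intro U V
    rw [h.w1_apply, br11]
    ring
end

section
/- Let (g,B) be a quadratic Lie superalgebra and D an even skew-supersymmetric superderivation of g. Define g̅ = ℂe ⊕ g ⊕ ℂf with bracket [X,Y]_{g̅} = [X,Y]_g + B(D(X),Y)·f, [e,X] = D(X), [f, g̅] = 0 for X,Y ∈ g, and bilinear form B̅ extending B with B̅(e,f) = 1, B̅(e,g) = B̅(f,g) = 0, B̅(e,e) = B̅(f,f) = 0. Then (g̅, B̅) is a quadratic Lie superalgebra. -/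
/-!
Check each axiom of `ℂe ⊕ g ⊕ ℂf = ℂ × g0 × ℂ` componentwise. The `g`-components reduce to the
axioms of `g` and the Leibniz rule for `D`, the `f`-components to the invariance of `B` and the
skewness of `D`. The one non-formal step is the `f`-component of the even Jacobi identity: it says
that `ω(X, Y) = B(DX, Y)` is a 2-cocycle, which the Leibniz rule and invariance give after
dividing by `3`.
-/

/-- A bilinear map between complex modules, given as a bare function. -/
def IsBilinMap {M N P : Type*} [AddCommGroup M] [Module ℂ M] [AddCommGroup N] [Module ℂ N]
    [AddCommGroup P] [Module ℂ P] (f : M → N → P) : Prop :=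
  (∀ (a : ℂ) (x y : M) (z : N), f (a • x + y) z = a • f x z + f y z) ∧
  (∀ (a : ℂ) (x : M) (y z : N), f x (a • y + z) = a • f x y + f x z)

/-- A quadratic Lie superalgebra `g = g0 ⊕ g1`, described by the components of its
super bracket (`b00 : g0 × g0 → g0`, `b01 : g0 × g1 → g1`, `b11 : g1 × g1 → g0`)
and of its even supersymmetric invariant non-degenerate bilinear form
(`B0` on the even part, `B1` on the odd part; evenness means that mixed pairings
vanish, which is built into this description). -/
structure QuadLieSuperalgebra (g0 g1 : Type*) [AddCommGroup g0] [Module ℂ g0]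
    [AddCommGroup g1] [Module ℂ g1] where
  b00 : g0 → g0 → g0
  b01 : g0 → g1 → g1
  b11 : g1 → g1 → g0
  B0 : g0 → g0 → ℂ
  B1 : g1 → g1 → ℂ
  hb00 : IsBilinMap b00
  hb01 : IsBilinMap b01
  hb11 : IsBilinMap b11
  hB0 : IsBilinMap B0
  hB1 : IsBilinMap B1
  /-- skew-supersymmetry on the even part -/
  b00_skew : ∀ X Y, b00 X Y = - b00 Y X
  /-- skew-supersymmetry on the odd part: `[U,V] = [V,U]` for odd `U, V` -/
  b11_symm : ∀ U V, b11 U V = b11 V U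
  /-- super Jacobi identity, (even, even, even) component -/
  jacobi000 : ∀ X Y Z, b00 (b00 X Y) Z + b00 (b00 Y Z) X + b00 (b00 Z X) Y = 0
  /-- super Jacobi identity, (even, even, odd) component -/
  jacobi001 : ∀ X Y U, b01 (b00 X Y) U = b01 X (b01 Y U) - b01 Y (b01 X U)
  /-- super Jacobi identity, (even, odd, odd) component -/
  jacobi011 : ∀ X U V, b00 X (b11 U V) = b11 (b01 X U) V + b11 U (b01 X V)
  /-- super Jacobi identity, (odd, odd, odd) component -/
  jacobi111 : ∀ U V W, b01 (b11 U V) W + b01 (b11 V W) U + b01 (b11 W U) V = 0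
  /-- supersymmetry of `B` on the even part -/
  B0_symm : ∀ X Y, B0 X Y = B0 Y X
  /-- supersymmetry of `B` on the odd part -/
  B1_skew : ∀ U V, B1 U V = - B1 V U
  /-- invariance, (even, even, even) component -/
  inv000 : ∀ X Y Z, B0 (b00 X Y) Z = B0 X (b00 Y Z)
  /-- invariance, (even, odd, odd) component -/
  inv011 : ∀ X U V, B1 (b01 X U) V = B0 X (b11 U V)
  /-- non-degeneracy on the even part -/
  B0_nondeg : ∀ X, (∀ Y, B0 X Y = 0) → X = 0
  /-- non-degeneracy on the odd part -/
  B1_nondeg : ∀ U, (∀ V, B1 U V = 0) → U = 0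

variable {g0 g1 : Type*} [AddCommGroup g0] [Module ℂ g0] [AddCommGroup g1] [Module ℂ g1]

theorem IsLinearMap.of_map_smul_add {R M N : Type*} [Semiring R] [AddCommGroup M] [Module R M]
    [AddCommGroup N] [Module R N] {f : M → N}
    (h : ∀ (a : R) (x y : M), f (a • x + y) = a • f x + f y) :
    IsLinearMap R f := by
  have map_zero : f 0 = 0 := by simpa using h 1 0 0
  exact ⟨fun x y => by simpa using h 1 x y, fun a x => by simpa [map_zero] using h a x 0⟩

namespace IsBilinMap
variable {M N P : Type*} [AddCommGroup M] [Module ℂ M] [AddCommGroup N] [Module ℂ N]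
    [AddCommGroup P] [Module ℂ P] {f : M → N → P}

theorem isLinearMap_left (h : IsBilinMap f) (z : N) : IsLinearMap ℂ (f · z) :=
  .of_map_smul_add fun a x y => h.1 a x y z

theorem isLinearMap_right (h : IsBilinMap f) (x : M) : IsLinearMap ℂ (f x) :=
  .of_map_smul_add fun a y z => h.2 a x y z

theorem map_add_left (h : IsBilinMap f) (x y : M) (z : N) : f (x + y) z = f x z + f y z :=
  (h.isLinearMap_left z).map_add x y
theorem map_smul_left (h : IsBilinMap f) (a : ℂ) (x : M) (z : N) : f (a • x) z = a • f x z :=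
  (h.isLinearMap_left z).map_smul a x
theorem map_sub_left (h : IsBilinMap f) (x y : M) (z : N) : f (x - y) z = f x z - f y z :=
  (h.isLinearMap_left z).map_sub x y
theorem map_add_right (h : IsBilinMap f) (x : M) (y z : N) : f x (y + z) = f x y + f x z :=
  (h.isLinearMap_right x).map_add y z
theorem map_smul_right (h : IsBilinMap f) (a : ℂ) (x : M) (y : N) : f x (a • y) = a • f x y :=
  (h.isLinearMap_right x).map_smul a y
theorem map_sub_right (h : IsBilinMap f) (x : M) (y z : N) : f x (y - z) = f x y - f x z :=
  (h.isLinearMap_right x).map_sub y z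
theorem map_zero_right (h : IsBilinMap f) (x : M) : f x 0 = 0 :=
  (h.isLinearMap_right x).map_zero

end IsBilinMap

namespace QuadLieSuperalgebra

variable (Q : QuadLieSuperalgebra g0 g1)

structure SkewDerivation where
  D0 : g0 →ₗ[ℂ] g0
  D1 : g1 →ₗ[ℂ] g1
  leibniz00 : ∀ X Y, D0 (Q.b00 X Y) = Q.b00 (D0 X) Y + Q.b00 X (D0 Y)
  leibniz01 : ∀ X U, D1 (Q.b01 X U) = Q.b01 (D0 X) U + Q.b01 X (D1 U)
  leibniz11 : ∀ U V, D0 (Q.b11 U V) = Q.b11 (D1 U) V + Q.b11 U (D1 V)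
  skew0 : ∀ X Y, Q.B0 (D0 X) Y = - Q.B0 X (D0 Y)
  skew1 : ∀ U V, Q.B1 (D1 U) V = - Q.B1 U (D1 V)

theorem B0_b00_rotate (X Y Z : g0) : Q.B0 (Q.b00 X Y) Z = Q.B0 (Q.b00 Y Z) X := by
  rw [Q.inv000, Q.B0_symm]

def extB0 (A B : ℂ × g0 × ℂ) : ℂ := Q.B0 A.2.1 B.2.1 + A.1 * B.2.2 + B.1 * A.2.2

theorem isBilinMap_extB0 : IsBilinMap Q.extB0 := by
  constructor
  · rintro r ⟨a, X, c⟩ ⟨b, Y, d⟩ ⟨e, Z, f⟩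
    simp only [extB0, Prod.smul_mk, smul_eq_mul, Prod.mk_add_mk, Q.hB0.map_add_left,
      Q.hB0.map_smul_left]
    ring
  · rintro r ⟨a, X, c⟩ ⟨b, Y, d⟩ ⟨e, Z, f⟩
    simp only [extB0, Prod.smul_mk, smul_eq_mul, Prod.mk_add_mk, Q.hB0.map_add_right,
      Q.hB0.map_smul_right]
    ring

theorem extB0_symm (A B : ℂ × g0 × ℂ) : Q.extB0 A B = Q.extB0 B A := by
  simp only [extB0]
  linear_combination Q.B0_symm A.2.1 B.2.1

theorem extB0_nondeg (A : ℂ × g0 × ℂ) (h : ∀ B, Q.extB0 A B = 0) : A = 0 := by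
  obtain ⟨a, X, c⟩ := A
  have ha : a = 0 := by simpa [extB0, Q.hB0.map_zero_right] using h (0, 0, 1)
  have hc : c = 0 := by simpa [extB0, Q.hB0.map_zero_right] using h (1, 0, 0)
  have hX : X = 0 := Q.B0_nondeg X fun Y => by simpa [extB0] using h (0, Y, 0)
  simp [ha, hc, hX]

namespace SkewDerivation

variable {Q} (D : Q.SkewDerivation)

theorem B0_D0_swap (X Y : g0) : Q.B0 (D.D0 X) Y = - Q.B0 (D.D0 Y) X := by
  rw [D.skew0, Q.B0_symm]

theorem B0_D0_D0_swap (X Y : g0) : Q.B0 (D.D0 (D.D0 X)) Y = Q.B0 (D.D0 (D.D0 Y)) X := by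
  rw [D.skew0, D.skew0 X, Q.B0_symm X, neg_neg]

theorem B1_D1_swap (U V : g1) : Q.B1 (D.D1 U) V = Q.B1 (D.D1 V) U := by
  rw [D.skew1, Q.B1_skew U, neg_neg]

theorem B0_D0_b00_cyclic (X Y Z : g0) :
    Q.B0 (D.D0 (Q.b00 X Y)) Z + Q.B0 (D.D0 (Q.b00 Y Z)) X + Q.B0 (D.D0 (Q.b00 Z X)) Y = 0 := by
  have expand (X Y Z : g0) : Q.B0 (D.D0 (Q.b00 X Y)) Z =
      Q.B0 (Q.b00 (D.D0 X) Y) Z + Q.B0 (Q.b00 (D.D0 Y) Z) X := by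
    rw [D.leibniz00, Q.hB0.map_add_left, Q.B0_b00_rotate X]
  have transpose (X Y Z : g0) : Q.B0 (Q.b00 (D.D0 X) Y) Z = - Q.B0 (D.D0 (Q.b00 Y Z)) X := by
    rw [Q.inv000, D.skew0, Q.B0_symm]
  -- With `S` the cyclic sum and `T` that of `B([DX, Y], Z)`: `expand` gives `S = 2T` and
  -- `transpose` gives `T = -S`, so `3S = 0`.
  linear_combination (expand X Y Z + expand Y Z X + expand Z X Y + 2 * transpose X Y Z
    + 2 * transpose Y Z X + 2 * transpose Z X Y) / 3

-- `(a, X, c) : ℂ × g0 × ℂ` stands for `a • e + X + c • f`.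
def extB00 (A B : ℂ × g0 × ℂ) : ℂ × g0 × ℂ :=
  (0, Q.b00 A.2.1 B.2.1 + A.1 • D.D0 B.2.1 - B.1 • D.D0 A.2.1, Q.B0 (D.D0 A.2.1) B.2.1)

def extB01 (A : ℂ × g0 × ℂ) (U : g1) : g1 := Q.b01 A.2.1 U + A.1 • D.D1 U

def extB11 (U V : g1) : ℂ × g0 × ℂ := (0, Q.b11 U V, Q.B1 (D.D1 U) V)

open IsBilinMap

theorem isBilinMap_extB00 : IsBilinMap D.extB00 := by
  constructor
  · rintro r ⟨a, X, c⟩ ⟨b, Y, d⟩ ⟨e, Z, f⟩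
    simp only [extB00, Prod.smul_mk, smul_eq_mul, Prod.mk_add_mk, hb00, map_add_left,
      map_smul_left, map_add, map_smul, smul_add, hB0, mul_zero, add_zero, Prod.mk.injEq, and_true,
      true_and]
    module
  · rintro r ⟨a, X, c⟩ ⟨b, Y, d⟩ ⟨e, Z, f⟩
    simp only [extB00, Prod.smul_mk, smul_eq_mul, Prod.mk_add_mk, hb00, map_add_right,
      map_smul_right, map_add, map_smul, smul_add, hB0, mul_zero, add_zero, Prod.mk.injEq, and_true,
      true_and]
    module

theorem isBilinMap_extB01 : IsBilinMap D.extB01 := by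
  constructor
  · rintro r ⟨a, X, c⟩ ⟨b, Y, d⟩ U
    simp only [extB01, Prod.smul_mk, smul_eq_mul, Prod.mk_add_mk, hb01, map_add_left, map_smul_left,
      smul_add]
    module
  · rintro r ⟨a, X, c⟩ U V
    simp only [extB01, hb01, map_add_right, map_smul_right, map_add, map_smul, smul_add]
    module

theorem isBilinMap_extB11 : IsBilinMap D.extB11 := by
  constructor
  · intro r U V W
    simp only [extB11, hb11, map_add_left, map_smul_left, map_add, map_smul, hB1, smul_eq_mul,
      Prod.smul_mk, mul_zero, Prod.mk_add_mk, add_zero]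
  · intro r U V W
    simp only [extB11, hb11, map_add_right, map_smul_right, hB1, smul_eq_mul, Prod.smul_mk,
      mul_zero, Prod.mk_add_mk, add_zero]

theorem extB00_skew (A B : ℂ × g0 × ℂ) : D.extB00 A B = - D.extB00 B A := by
  simp only [extB00, Prod.neg_mk, neg_zero, Prod.mk.injEq, true_and]
  exact ⟨by linear_combination (norm := module) Q.b00_skew _ _, D.B0_D0_swap _ _⟩

theorem extB11_symm (U V : g1) : D.extB11 U V = D.extB11 V U := by
  simp only [extB11, Q.b11_symm U V, D.B1_D1_swap U V]

theorem extB00_jacobi (A B C : ℂ × g0 × ℂ) :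
    D.extB00 (D.extB00 A B) C + D.extB00 (D.extB00 B C) A + D.extB00 (D.extB00 C A) B = 0 := by
  obtain ⟨a, X, c⟩ := A
  obtain ⟨b, Y, d⟩ := B
  obtain ⟨e, Z, f⟩ := C
  simp only [extB00, hb00, map_sub_left, map_add_left, map_smul_left, zero_smul, add_zero, map_sub,
    map_add, map_smul, hB0, smul_eq_mul, Prod.mk_add_mk, Prod.mk_eq_zero, true_and]
  constructor
  · linear_combination (norm := module) Q.jacobi000 X Y Z
      - a • (Q.b00_skew Y (D.D0 Z) + D.leibniz00 Y Z)
      - b • (Q.b00_skew (D.D0 X) Z + D.leibniz00 Z X)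
      - e • (Q.b00_skew X (D.D0 Y) + D.leibniz00 X Y)
  · linear_combination D.B0_D0_b00_cyclic X Y Z + a * D.B0_D0_D0_swap Y Z
      + b * D.B0_D0_D0_swap Z X + e * D.B0_D0_D0_swap X Y

theorem extB01_jacobi (A B : ℂ × g0 × ℂ) (U : g1) :
    D.extB01 (D.extB00 A B) U = D.extB01 A (D.extB01 B U) - D.extB01 B (D.extB01 A U) := by
  obtain ⟨a, X, c⟩ := A
  obtain ⟨b, Y, d⟩ := B
  simp only [extB01, extB00, hb01, map_sub_left, map_add_left, map_smul_left, zero_smul, add_zero,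
    map_add_right, map_smul_right, map_add, D.leibniz01, map_smul, smul_add]
  linear_combination (norm := module) Q.jacobi001 X Y U

theorem extB00_extB11_jacobi (A : ℂ × g0 × ℂ) (U V : g1) :
    D.extB00 A (D.extB11 U V) = D.extB11 (D.extB01 A U) V + D.extB11 U (D.extB01 A V) := by
  obtain ⟨a, X, c⟩ := A
  simp only [extB00, extB11, D.leibniz11, smul_add, zero_smul, sub_zero, extB01, hb11, map_add_left,
    map_smul_left, map_add, D.leibniz01, map_smul, hB1, smul_eq_mul, map_add_right, map_smul_right,
    Prod.mk_add_mk, add_zero, Prod.mk.injEq, true_and]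
  constructor
  · linear_combination (norm := module) Q.jacobi011 X U V
  · have b11_comm := congrArg (Q.B0 X) (Q.b11_symm (D.D1 U) V)
    linear_combination - Q.inv011 (D.D0 X) U V - Q.inv011 X (D.D1 U) V + Q.inv011 X V (D.D1 U)
      - Q.B1_skew (D.D1 U) (Q.b01 X V) - a * D.skew1 (D.D1 U) V - b11_comm

theorem extB11_jacobi (U V W : g1) :
    D.extB01 (D.extB11 U V) W + D.extB01 (D.extB11 V W) U + D.extB01 (D.extB11 W U) V = 0 := by
  simpa [extB01, extB11] using Q.jacobi111 U V W

theorem extB0_invariant (A B C : ℂ × g0 × ℂ) :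
    Q.extB0 (D.extB00 A B) C = Q.extB0 A (D.extB00 B C) := by
  obtain ⟨a, X, c⟩ := A
  obtain ⟨b, Y, d⟩ := B
  obtain ⟨e, Z, f⟩ := C
  simp only [extB0, extB00, hB0, map_sub_left, map_add_left, map_smul_left, smul_eq_mul, zero_mul,
    add_zero, map_sub_right, map_add_right, map_smul_right]
  linear_combination Q.inv000 X Y Z - b * D.skew0 X Z + e * D.skew0 X Y

theorem B1_extB01_invariant (A : ℂ × g0 × ℂ) (U V : g1) :
    Q.B1 (D.extB01 A U) V = Q.extB0 A (D.extB11 U V) := by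
  obtain ⟨a, X, c⟩ := A
  simp only [extB01, hB1, map_add_left, map_smul_left, smul_eq_mul, extB0, extB11, zero_mul,
    add_zero]
  linear_combination Q.inv011 X U V

def doubleExtension : QuadLieSuperalgebra (ℂ × g0 × ℂ) g1 where
  b00 := D.extB00
  b01 := D.extB01
  b11 := D.extB11
  B0 := Q.extB0
  B1 := Q.B1
  hb00 := D.isBilinMap_extB00
  hb01 := D.isBilinMap_extB01
  hb11 := D.isBilinMap_extB11
  hB0 := Q.isBilinMap_extB0
  hB1 := Q.hB1
  b00_skew := D.extB00_skew
  b11_symm := D.extB11_symm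
  jacobi000 := D.extB00_jacobi
  jacobi001 := D.extB01_jacobi
  jacobi011 := D.extB00_extB11_jacobi
  jacobi111 := D.extB11_jacobi
  B0_symm := Q.extB0_symm
  B1_skew := Q.B1_skew
  inv000 := D.extB0_invariant
  inv011 := D.B1_extB01_invariant
  B0_nondeg := Q.extB0_nondeg
  B1_nondeg := Q.B1_nondeg

end SkewDerivation
end QuadLieSuperalgebra

/-- One-dimensional double extension: given a quadratic Lie superalgebra `(g,B)` and an
even skew-supersymmetric superderivation `D` (with components `D0`, `D1`), the space
`g̅ = ℂe ⊕ g ⊕ ℂf` (an element of `ℂ × g0 × ℂ` is `a•e + X + c•f`) with bracket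
`[X,Y]_g̅ = [X,Y]_g + B(D X, Y)·f`, `[e,X] = D X`, `[f,g̅] = 0` and form `B̅` extending `B`
with `B̅(e,f) = 1`, `B̅(e,e) = B̅(f,f) = 0`, `B̅(e,g) = B̅(f,g) = 0`
is again a quadratic Lie superalgebra. -/
theorem double_extension_is_quadratic_lie_superalgebra
    (Q : QuadLieSuperalgebra g0 g1) (D0 : g0 → g0) (D1 : g1 → g1)
    (hD0lin : ∀ (a : ℂ) (X Y : g0), D0 (a • X + Y) = a • D0 X + D0 Y)
    (hD1lin : ∀ (a : ℂ) (U V : g1), D1 (a • U + V) = a • D1 U + D1 V)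
    (hder00 : ∀ X Y, D0 (Q.b00 X Y) = Q.b00 (D0 X) Y + Q.b00 X (D0 Y))
    (hder01 : ∀ X U, D1 (Q.b01 X U) = Q.b01 (D0 X) U + Q.b01 X (D1 U))
    (hder11 : ∀ U V, D0 (Q.b11 U V) = Q.b11 (D1 U) V + Q.b11 U (D1 V))
    (hskew0 : ∀ X Y, Q.B0 (D0 X) Y = - Q.B0 X (D0 Y))
    (hskew1 : ∀ U V, Q.B1 (D1 U) V = - Q.B1 U (D1 V)) :
    ∃ Qbar : QuadLieSuperalgebra (ℂ × g0 × ℂ) g1,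
      Qbar.b00 = (fun A B =>
        ((0 : ℂ), Q.b00 A.2.1 B.2.1 + A.1 • D0 B.2.1 - B.1 • D0 A.2.1,
          Q.B0 (D0 A.2.1) B.2.1)) ∧
      Qbar.b01 = (fun A U => Q.b01 A.2.1 U + A.1 • D1 U) ∧
      Qbar.b11 = (fun U V => ((0 : ℂ), Q.b11 U V, Q.B1 (D1 U) V)) ∧
      Qbar.B0 = (fun A B => Q.B0 A.2.1 B.2.1 + A.1 * B.2.2 + B.1 * A.2.2) ∧
      Qbar.B1 = Q.B1 := by
  let D : Q.SkewDerivation :=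
    { D0 := IsLinearMap.mk' D0 (.of_map_smul_add hD0lin)
      D1 := IsLinearMap.mk' D1 (.of_map_smul_add hD1lin)
      leibniz00 := hder00
      leibniz01 := hder01
      leibniz11 := hder11
      skew0 := hskew0
      skew1 := hskew1 }
  exact ⟨D.doubleExtension, rfl, rfl, rfl, rfl, rfl⟩
end
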